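/- arXiv:1302.1260 — 2 statements merged into one kernel-verified Lean document; each statement's English description precedes it below -/
import Mathlib

section
/- With f(k₁,k₂) = 1 + e^{ik₁} + e^{ik₂}, at each zero k* of f the function f has a nonvanishing differential; consequently the eigenvalue functions ±|f| have a conical (Dirac-point) structure at k*: there exist constants c₂ > c₁ > 0 and a neighborhood U of k* such that c₁·dist(k, k*) ≤ |f(k)| ≤ c₂·dist(k, k*) for all k ∈ U. -/
/-!
At a zero of `f`, the unit vectors `a = e^{ik₁}` and `b = e^{ik₂}` satisfy `a + b = -1`, so
`⟪a, b⟫ = -1/2` and the differential `v ↦ i (v₁ a + v₂ b)` has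
`|df(v)|² = v₁² - v₁ v₂ + v₂² ≥ ‖v‖² / 4`. A map vanishing at a point where its derivative is
bounded below is squeezed between two multiples of the distance to that point.
-/

open Complex ContinuousLinearMap Topology

/-- `f(k₁,k₂) = 1 + e^{ik₁} + e^{ik₂}` as a map on `ℝ²` (periodic, hence descends to `T²`). -/
noncomputable def grapheneF : ℝ × ℝ → ℂ := fun k =>
  1 + Complex.exp (Complex.I * k.1) + Complex.exp (Complex.I * k.2)

theorem HasFDerivAt.exists_conical_bounds {𝕜 E F : Type*} [NontriviallyNormedField 𝕜]
    [NormedAddCommGroup E] [NormedSpace 𝕜 E] [NormedAddCommGroup F] [NormedSpace 𝕜 F]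
    {f : E → F} {L : E →L[𝕜] F} {k : E} {c : ℝ} (hf : HasFDerivAt f L k) (hk : f k = 0)
    (hc : 0 < c) (hL : ∀ v, c * ‖v‖ ≤ ‖L v‖) :
    ∃ c₁ c₂ : ℝ, 0 < c₁ ∧ c₁ < c₂ ∧ ∃ U ∈ 𝓝 k, ∀ x ∈ U,
      c₁ * dist x k ≤ ‖f x‖ ∧ ‖f x‖ ≤ c₂ * dist x k := by
  have hlin : ∀ᶠ x in 𝓝 k, ‖f x - L (x - k)‖ ≤ c / 2 * ‖x - k‖ := by
    simpa [hk] using hf.isLittleO.def (half_pos hc)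
  obtain ⟨U, hU, hUlin⟩ := hlin.exists_mem
  refine ⟨c / 2, ‖L‖ + c, half_pos hc, by linarith [norm_nonneg L], U, hU, fun x hx ↦ ?_⟩
  have hfx := hUlin x hx
  have hlow := hL (x - k)
  have hup := L.le_opNorm (x - k)
  have htri₁ := norm_sub_norm_le (L (x - k)) (f x)
  have htri₂ := norm_le_norm_add_norm_sub' (f x) (L (x - k))
  rw [norm_sub_rev] at htri₁
  rw [dist_eq_norm]
  constructor <;> nlinarith [norm_nonneg (x - k)]

theorem norm_smul_add_smul_sq_of_norm_eq_one {E : Type*} [NormedAddCommGroup E]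
    [InnerProductSpace ℝ E] {a b : E} (ha : ‖a‖ = 1) (hb : ‖b‖ = 1) (hab : ‖a + b‖ = 1)
    (s t : ℝ) : ‖s • a + t • b‖ ^ 2 = s ^ 2 - s * t + t ^ 2 := by
  have hinner : inner ℝ a b = -1 / 2 := by
    have := norm_add_sq_real a b
    rw [ha, hb, hab] at this
    linarith
  rw [norm_add_sq_real, norm_smul, norm_smul, inner_smul_left, inner_smul_right, hinner, ha, hb]
  simp only [Real.norm_eq_abs, mul_one, sq_abs, RCLike.conj_to_real]
  ring

theorem norm_le_two_mul_norm_smul_add_smul {E : Type*} [NormedAddCommGroup E]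
    [InnerProductSpace ℝ E] {a b : E} (ha : ‖a‖ = 1) (hb : ‖b‖ = 1) (hab : ‖a + b‖ = 1)
    (v : ℝ × ℝ) : ‖v‖ ≤ 2 * ‖v.1 • a + v.2 • b‖ := by
  have hsq := norm_smul_add_smul_sq_of_norm_eq_one ha hb hab v.1 v.2
  have hpos : 0 ≤ 2 * ‖v.1 • a + v.2 • b‖ := by positivity
  rw [norm_prod_le_iff, Real.norm_eq_abs, Real.norm_eq_abs]
  constructor <;> apply abs_le_of_sq_le_sq _ hpos <;>
    nlinarith [sq_nonneg (v.1 - v.2), sq_nonneg (v.1 - 2 * v.2), sq_nonneg (2 * v.1 - v.2)]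

theorem hasFDerivAt_cexp_I_mul_ofReal {E : Type*} [NormedAddCommGroup E] [NormedSpace ℝ E]
    (l : E →L[ℝ] ℝ) (k : E) :
    HasFDerivAt (fun x ↦ exp (I * l x)) (l.smulRight (I * exp (I * l k))) k := by
  refine (((ofRealCLM.hasFDerivAt.comp k l.hasFDerivAt).const_mul I).cexp).congr_fderiv ?_
  ext
  simp
  ring

noncomputable def grapheneDeriv (k : ℝ × ℝ) : ℝ × ℝ →L[ℝ] ℂ :=
  (fst ℝ ℝ ℝ).smulRight (I * exp (I * k.1)) + (snd ℝ ℝ ℝ).smulRight (I * exp (I * k.2))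

theorem grapheneDeriv_apply (k v : ℝ × ℝ) :
    grapheneDeriv k v = v.1 • (I * exp (I * k.1)) + v.2 • (I * exp (I * k.2)) :=
  rfl

theorem hasFDerivAt_grapheneF (k : ℝ × ℝ) : HasFDerivAt grapheneF (grapheneDeriv k) k :=
  ((hasFDerivAt_cexp_I_mul_ofReal (fst ℝ ℝ ℝ) k).const_add 1).add
    (hasFDerivAt_cexp_I_mul_ofReal (snd ℝ ℝ ℝ) k)

theorem norm_le_two_mul_norm_grapheneDeriv {k : ℝ × ℝ} (hk : grapheneF k = 0) (v : ℝ × ℝ) :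
    ‖v‖ ≤ 2 * ‖grapheneDeriv k v‖ := by
  have hunit (t : ℝ) : ‖I * exp (I * t)‖ = 1 := by simp [mul_comm I, norm_exp_ofReal_mul_I]
  have hsum : exp (I * k.1) + exp (I * k.2) = -1 := by
    rw [grapheneF, add_assoc] at hk
    exact eq_neg_of_add_eq_zero_right hk
  have hsum_unit : ‖I * exp (I * k.1) + I * exp (I * k.2)‖ = 1 := by
    rw [← mul_add, hsum]
    simp
  rw [grapheneDeriv_apply]
  exact norm_le_two_mul_norm_smul_add_smul (hunit _) (hunit _) hsum_unit v

/-- At each zero `k*` of `f(k₁,k₂) = 1 + e^{ik₁} + e^{ik₂}` the differential of `f` is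
nonvanishing; consequently `|f|` has a conical (Dirac-point) structure at `k*`: there are
constants `c₂ > c₁ > 0` and a neighborhood `U` of `k*` on which
`c₁ · dist(k,k*) ≤ |f(k)| ≤ c₂ · dist(k,k*)`. -/
theorem graphene_conical_at_zero (k : ℝ × ℝ) (hk : grapheneF k = 0) :
    fderiv ℝ grapheneF k ≠ 0 ∧
    ∃ c₁ c₂ : ℝ, 0 < c₁ ∧ c₁ < c₂ ∧ ∃ U ∈ nhds k, ∀ x ∈ U,
      c₁ * dist x k ≤ ‖grapheneF x‖ ∧
      ‖grapheneF x‖ ≤ c₂ * dist x k := by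
  have hlow (v : ℝ × ℝ) : 1 / 2 * ‖v‖ ≤ ‖grapheneDeriv k v‖ := by
    linarith [norm_le_two_mul_norm_grapheneDeriv hk v]
  refine ⟨?_, (hasFDerivAt_grapheneF k).exists_conical_bounds hk one_half_pos hlow⟩
  rw [(hasFDerivAt_grapheneF k).fderiv]
  intro h
  have := norm_le_two_mul_norm_grapheneDeriv hk (1, 0)
  norm_num [h] at this
end

section
/- Let H(k) be the diamond-lattice Bloch Hamiltonian, the 2×2 Hermitian matrix with zero diagonal and off-diagonal entry f(k) = 1 + e^{ik₁} + e^{ik₂} + e^{ik₃} on T³. Then the degenerate locus {k ∈ T³ : f(k) = 0} is the union of the three circles given by k_i = π and k_j ≡ k_k + π (mod 2π) for {i,j,k} = {1,2,3}. -/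
open Real

lemma exp_neg_iff (x y : ℝ) :
    Complex.exp (Complex.I * x) = -Complex.exp (Complex.I * y) ↔
      ∃ n : ℤ, x = y + π + 2 * π * n := by
  have h1 : -Complex.exp (Complex.I * y) = Complex.exp (Complex.I * ((y : ℂ) + π)) := by
    rw [mul_add, Complex.exp_add, mul_comm Complex.I (π : ℂ), Complex.exp_pi_mul_I]
    ring
  rw [h1, Complex.exp_eq_exp_iff_exists_int]
  constructor
  · rintro ⟨n, hn⟩
    refine ⟨n, ?_⟩
    have h2 : Complex.I * x = Complex.I * ((y : ℂ) + π + 2 * π * n) := by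
      rw [hn]; ring
    have h3 := mul_left_cancel₀ Complex.I_ne_zero h2
    exact_mod_cast h3
  · rintro ⟨n, hn⟩
    refine ⟨n, ?_⟩
    rw [hn]; push_cast; ring

/-- The diamond-lattice Bloch function `f(k₁,k₂,k₃) = 1 + e^{ik₁} + e^{ik₂} + e^{ik₃}`. -/
noncomputable def diamondF (k₁ k₂ k₃ : ℝ) : ℂ :=
  1 + Complex.exp (Complex.I * k₁) + Complex.exp (Complex.I * k₂) + Complex.exp (Complex.I * k₃)

/-- The diamond Bloch Hamiltonian `H(k) = [[0, f(k)],[conj f(k), 0]]`. -/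
noncomputable def diamondH (k₁ k₂ k₃ : ℝ) : Matrix (Fin 2) (Fin 2) ℂ :=
  !![0, diamondF k₁ k₂ k₃; starRingEnd ℂ (diamondF k₁ k₂ k₃), 0]

/-- The degenerate locus of the diamond Hamiltonian, i.e. the zero set of
`f(k) = 1 + e^{ik₁} + e^{ik₂} + e^{ik₃}` on `T³`, is the union of the three circles
`k_i = π, k_j ≡ k_k + π (mod 2π)` for `{i,j,k} = {1,2,3}`. -/
theorem diamond_degenerate_locus (k₁ k₂ k₃ : ℝ) :
    diamondF k₁ k₂ k₃ = 0 ↔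
      ((∃ m n : ℤ, k₁ = π + 2 * π * m ∧ k₂ = k₃ + π + 2 * π * n) ∨
       (∃ m n : ℤ, k₂ = π + 2 * π * m ∧ k₁ = k₃ + π + 2 * π * n) ∨
       (∃ m n : ℤ, k₃ = π + 2 * π * m ∧ k₁ = k₂ + π + 2 * π * n)) := by
  set a := Complex.exp (Complex.I * k₁) with ha
  set b := Complex.exp (Complex.I * k₂) with hb
  set c := Complex.exp (Complex.I * k₃) with hc
  have hane : a ≠ 0 := Complex.exp_ne_zero _
  have hbne : b ≠ 0 := Complex.exp_ne_zero _
  have hcne : c ≠ 0 := Complex.exp_ne_zero _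
  have hainv : a⁻¹ = Complex.exp (-(Complex.I * k₁)) := by rw [Complex.exp_neg, ha]
  have hbinv : b⁻¹ = Complex.exp (-(Complex.I * k₂)) := by rw [Complex.exp_neg, hb]
  have hcinv : c⁻¹ = Complex.exp (-(Complex.I * k₃)) := by rw [Complex.exp_neg, hc]
  constructor
  · intro h
    rw [diamondF] at h
    rw [← ha, ← hb, ← hc] at h
    have hconj : 1 + a⁻¹ + b⁻¹ + c⁻¹ = 0 := by
      have := congrArg (starRingEnd ℂ) h
      simp only [map_add, map_one, map_zero, ha, hb, hc, ← Complex.exp_conj, map_mul,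
        Complex.conj_I, Complex.conj_ofReal] at this
      rw [hainv, hbinv, hcinv]
      convert this using 3 <;> ring_nf
    have hprod : (1 + a) * ((1 + b) * (1 + c)) = 0 := by
      have key : (1 + a) * ((1 + b) * (1 + c)) =
          (1 + a + b + c) + a * b * c * (1 + a⁻¹ + b⁻¹ + c⁻¹) := by
        field_simp
        ring
      rw [key, h, hconj, mul_zero, add_zero]
    rcases mul_eq_zero.mp hprod with h1 | h2
    · -- a = -1
      have ha1 : a = -Complex.exp (Complex.I * (0 : ℝ)) := by
        simp; linear_combination h1
      obtain ⟨m, hm⟩ := (exp_neg_iff k₁ 0).mp ha1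
      have hbc : b = -c := by
        rw [eq_neg_of_add_eq_zero_left h1] at h
        linear_combination h
      have hbc' : b = -Complex.exp (Complex.I * k₃) := by rw [hbc, hc]
      obtain ⟨n, hn⟩ := (exp_neg_iff k₂ k₃).mp hbc'
      exact Or.inl ⟨m, n, by linarith, hn⟩
    rcases mul_eq_zero.mp h2 with h1 | h1
    · have hb1 : b = -Complex.exp (Complex.I * (0 : ℝ)) := by
        simp; linear_combination h1
      obtain ⟨m, hm⟩ := (exp_neg_iff k₂ 0).mp hb1
      have hac : a = -c := by
        rw [eq_neg_of_add_eq_zero_left h1] at h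
        linear_combination h
      have hac' : a = -Complex.exp (Complex.I * k₃) := by rw [hac, hc]
      obtain ⟨n, hn⟩ := (exp_neg_iff k₁ k₃).mp hac'
      exact Or.inr (Or.inl ⟨m, n, by linarith, hn⟩)
    · have hc1 : c = -Complex.exp (Complex.I * (0 : ℝ)) := by
        simp; linear_combination h1
      obtain ⟨m, hm⟩ := (exp_neg_iff k₃ 0).mp hc1
      have hab : a = -b := by
        rw [eq_neg_of_add_eq_zero_left h1] at h
        linear_combination h
      have hab' : a = -Complex.exp (Complex.I * k₂) := by rw [hab, hb]
      obtain ⟨n, hn⟩ := (exp_neg_iff k₁ k₂).mp hab'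
      exact Or.inr (Or.inr ⟨m, n, by linarith, hn⟩)
  · rintro (⟨m, n, h1, h2⟩ | ⟨m, n, h1, h2⟩ | ⟨m, n, h1, h2⟩) <;>
      rw [diamondF, ← ha, ← hb, ← hc]
    · have e1 : a = -Complex.exp (Complex.I * (0 : ℝ)) :=
        (exp_neg_iff k₁ 0).mpr ⟨m, by linarith⟩
      have e2 : b = -c := by
        rw [hb, hc, exp_neg_iff k₂ k₃]; exact ⟨n, h2⟩
      simp at e1; rw [e1, e2]; ring
    · have e1 : b = -Complex.exp (Complex.I * (0 : ℝ)) :=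
        (exp_neg_iff k₂ 0).mpr ⟨m, by linarith⟩
      have e2 : a = -c := by
        rw [ha, hc, exp_neg_iff k₁ k₃]; exact ⟨n, h2⟩
      simp at e1; rw [e1, e2]; ring
    · have e1 : c = -Complex.exp (Complex.I * (0 : ℝ)) :=
        (exp_neg_iff k₃ 0).mpr ⟨m, by linarith⟩
      have e2 : a = -b := by
        rw [ha, hb, exp_neg_iff k₁ k₂]; exact ⟨n, h2⟩
      simp at e1; rw [e1, e2]; ring
end
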